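/- There exists a constant C > 0 such that for all real numbers s and N·T with 0 ≤ s ≤ N·T (T > 0 fixed), the integral ∫₀^{NT} 1/((NT-s+1)·ln²(NT-s+e)) · 1/((s+1)·ln²(s+e)) ds is bounded by C/((NT/2+1)·ln²(NT/2+e)). -/

import Mathlib

/-!
Write `φ s = 1 / ((s + 1) log² (s + e))` (`logSqDecay`), so the integrand is `φ (M - s) φ s`
with `M = N T`. It is symmetric under `s ↦ M - s`, so the integral is twice the integral over
`[0, M/2]`, where `φ (M - s) ≤ φ (M/2)` because `φ` is decreasing. What remains is
`∫₀^{M/2} φ ≤ e`, which follows from `φ s ≤ e / ((s + e) log² (s + e))`, a function with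
antiderivative `-1 / log (s + e)`.
-/

open Real MeasureTheory intervalIntegral Set

section Reflection

variable {f : ℝ → ℝ} {M : ℝ}

lemma ContinuousOn.comp_sub_mul (hf : ContinuousOn f (Icc 0 M)) :
    ContinuousOn (fun s => f (M - s) * f s) (Icc 0 M) :=
  (hf.comp (by fun_prop) fun s hs => ⟨by linarith [hs.2], by linarith [hs.1]⟩).mul hf

lemma integral_comp_sub_mul_eq_two_mul (hM : 0 ≤ M) (hf : ContinuousOn f (Icc 0 M)) :
    ∫ s in (0 : ℝ)..M, f (M - s) * f s = 2 * ∫ s in (0 : ℝ)..M / 2, f (M - s) * f s := by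
  set G : ℝ → ℝ := fun s => f (M - s) * f s
  have hG_int {a b : ℝ} (ha : 0 ≤ a) (hab : a ≤ b) (hb : b ≤ M) :
      IntervalIntegrable G volume a b :=
    (hf.comp_sub_mul.mono (by rw [uIcc_of_le hab]; exact Icc_subset_Icc ha hb)).intervalIntegrable
  have hG_symm : ∀ s, G (M - s) = G s := fun s => by simp only [G, sub_sub_cancel, mul_comm]
  have h_upper : ∫ s in M / 2..M, G s = ∫ s in (0 : ℝ)..M / 2, G s := by
    calc ∫ s in M / 2..M, G s = ∫ s in M / 2..M, G (M - s) := by simp only [hG_symm]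
      _ = ∫ s in M - M..M - M / 2, G s := integral_comp_sub_left G M
      _ = ∫ s in (0 : ℝ)..M / 2, G s := by rw [sub_self, sub_half]
  rw [← integral_add_adjacent_intervals (hG_int (b := M / 2) le_rfl (by linarith) (by linarith))
    (hG_int (by linarith) (by linarith) le_rfl), h_upper, two_mul]

lemma integral_comp_sub_mul_le_of_antitoneOn (hM : 0 ≤ M) (hf : ContinuousOn f (Icc 0 M))
    (hf_anti : AntitoneOn f (Icc 0 M)) (hf_nonneg : ∀ s ∈ Icc 0 M, 0 ≤ f s) :
    ∫ s in (0 : ℝ)..M, f (M - s) * f s ≤ 2 * (f (M / 2) * ∫ s in (0 : ℝ)..M / 2, f s) := by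
  have hsub : Icc 0 (M / 2) ⊆ Icc 0 M := Icc_subset_Icc le_rfl (by linarith)
  have hf_int : IntervalIntegrable f volume 0 (M / 2) :=
    (hf.mono hsub).intervalIntegrable_of_Icc (by linarith)
  have hG_int : IntervalIntegrable (fun s => f (M - s) * f s) volume 0 (M / 2) :=
    (hf.comp_sub_mul.mono hsub).intervalIntegrable_of_Icc (by linarith)
  rw [integral_comp_sub_mul_eq_two_mul hM hf, ← intervalIntegral.integral_const_mul (f (M / 2))]
  refine mul_le_mul_of_nonneg_left ?_ zero_le_two
  refine integral_mono_on (by linarith) hG_int (hf_int.const_mul _) fun s hs => ?_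
  exact mul_le_mul_of_nonneg_right
    (hf_anti ⟨by linarith, by linarith⟩ ⟨by linarith [hs.2], by linarith [hs.1]⟩
      (by linarith [hs.2])) (hf_nonneg s (hsub hs))

end Reflection

lemma one_le_log_add_exp_one {s : ℝ} (hs : 0 ≤ s) : 1 ≤ log (s + exp 1) := by
  simpa using log_le_log (exp_pos 1) (by linarith : exp 1 ≤ s + exp 1)

noncomputable def logSqDecay (s : ℝ) : ℝ := 1 / ((s + 1) * log (s + exp 1) ^ 2)

lemma logSqDecay_nonneg {s : ℝ} (hs : 0 ≤ s) : 0 ≤ logSqDecay s := by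
  have := one_le_log_add_exp_one hs
  unfold logSqDecay
  positivity

lemma antitoneOn_logSqDecay : AntitoneOn logSqDecay (Ici 0) := by
  intro a ha b hb hab
  rw [mem_Ici] at ha hb
  have hlog_a := one_le_log_add_exp_one ha
  have hlog : log (a + exp 1) ≤ log (b + exp 1) := log_le_log (by positivity) (by linarith)
  unfold logSqDecay
  gcongr

lemma continuousOn_logSqDecay : ContinuousOn logSqDecay (Ici 0) := by
  intro s (hs : 0 ≤ s)
  have := one_le_log_add_exp_one hs
  have : s + exp 1 ≠ 0 := by positivity
  have : (s + 1) * log (s + exp 1) ^ 2 ≠ 0 := by positivity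
  refine ContinuousAt.continuousWithinAt ?_
  unfold logSqDecay
  fun_prop (disch := assumption)

lemma hasDerivAt_neg_inv_log_add_exp_one {s : ℝ} (hs : 0 ≤ s) :
    HasDerivAt (fun t => -(log (t + exp 1))⁻¹) ((s + exp 1) * log (s + exp 1) ^ 2)⁻¹ s := by
  have hlog := one_le_log_add_exp_one hs
  refine ((((hasDerivAt_id' s).add_const (exp 1)).log (by positivity)).fun_inv
    (by positivity)).fun_neg.congr_deriv ?_
  field_simp

lemma logSqDecay_le {s : ℝ} (hs : 0 ≤ s) :
    logSqDecay s ≤ exp 1 * ((s + exp 1) * log (s + exp 1) ^ 2)⁻¹ := by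
  have := one_le_log_add_exp_one hs
  have he : 1 ≤ exp 1 := one_le_exp zero_le_one
  rw [logSqDecay, ← div_eq_mul_inv, div_le_div_iff₀ (by positivity) (by positivity)]
  nlinarith [mul_nonneg (mul_nonneg (sub_nonneg.2 he) hs) (sq_nonneg (log (s + exp 1)))]

lemma integral_logSqDecay_le_exp_one {X : ℝ} (hX : 0 ≤ X) :
    ∫ s in (0 : ℝ)..X, logSqDecay s ≤ exp 1 := by
  have hderiv : ∀ s ∈ Icc 0 X, HasDerivAt (fun t => exp 1 * -(log (t + exp 1))⁻¹)
      (exp 1 * ((s + exp 1) * log (s + exp 1) ^ 2)⁻¹) s := fun s hs =>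
    (hasDerivAt_neg_inv_log_add_exp_one hs.1).const_mul _
  have hcont : ContinuousOn logSqDecay (Icc 0 X) :=
    continuousOn_logSqDecay.mono Icc_subset_Ici_self
  refine (integral_le_sub_of_hasDeriv_right_of_le hX
    (fun s hs => (hderiv s hs).continuousAt.continuousWithinAt)
    (fun s hs => (hderiv s (Ioo_subset_Icc_self hs)).hasDerivWithinAt)
    (hcont.integrableOn_Icc) fun s hs => logSqDecay_le hs.1.le).trans ?_
  have := one_le_log_add_exp_one hX
  have : 0 ≤ exp 1 * (log (X + exp 1))⁻¹ := by positivity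
  simp only [zero_add, log_exp, inv_one]
  linarith

/-- Continuous convolution bound: for fixed `T > 0` there is `C > 0` such that for
every positive integer `N`,
`∫₀^{NT} 1/((NT-s+1)·ln²(NT-s+e)) · 1/((s+1)·ln²(s+e)) ds ≤ C/((NT/2+1)·ln²(NT/2+e))`. -/
theorem continuous_convolution_bound (T : ℝ) (hT : 0 < T) :
    ∃ C : ℝ, 0 < C ∧ ∀ N : ℕ, 1 ≤ N →
      (∫ s in (0 : ℝ)..(N : ℝ) * T,
          (1 / (((N : ℝ) * T - s + 1) * (Real.log ((N : ℝ) * T - s + Real.exp 1)) ^ 2)) *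
          (1 / ((s + 1) * (Real.log (s + Real.exp 1)) ^ 2)))
        ≤ C / (((N : ℝ) * T / 2 + 1) * (Real.log ((N : ℝ) * T / 2 + Real.exp 1)) ^ 2) := by
  refine ⟨2 * exp 1, by positivity, fun N _ => ?_⟩
  set M := (N : ℝ) * T
  have hM : 0 ≤ M := by positivity
  have hM2 : 0 ≤ M / 2 := by positivity
  have hIcc : Icc 0 M ⊆ Ici 0 := Icc_subset_Ici_self
  calc ∫ s in (0 : ℝ)..M, logSqDecay (M - s) * logSqDecay s
      ≤ 2 * (logSqDecay (M / 2) * ∫ s in (0 : ℝ)..M / 2, logSqDecay s) :=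
        integral_comp_sub_mul_le_of_antitoneOn hM (continuousOn_logSqDecay.mono hIcc)
          (antitoneOn_logSqDecay.mono hIcc) fun s hs => logSqDecay_nonneg hs.1
    _ ≤ 2 * (logSqDecay (M / 2) * exp 1) := by
        gcongr
        · exact logSqDecay_nonneg hM2
        · exact integral_logSqDecay_le_exp_one hM2
    _ = 2 * exp 1 / ((M / 2 + 1) * log (M / 2 + exp 1) ^ 2) := by
        unfold logSqDecay
        ring
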